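/- arXiv:2405.07008 — 8 statements merged into one kernel-verified Lean document; each statement's English description precedes it below -/
import Mathlib

section
/- For the newsvendor profit function π(q,u) = p·min{q,u} − cq with price p > c > 0, and the inf-convolution ℓ(α,q,v) = min_{u ≥ 0} { π(q,u) + α(u−v)² } with α > 0: if 0 ≤ q ≤ p/(4α), then ℓ(α,q,v) = min{αv², pq} − cq for all v ≥ 0. -/
/-- Newsvendor profit π(q,u) = p·min{q,u} − cq; for 0 ≤ q ≤ p/(4α),
the inf-convolution ℓ(α,q,v) = min_{u≥0} {π(q,u) + α(u−v)²} equals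
min{αv², pq} − cq for all v ≥ 0. -/
theorem stmt_0 (p c α q : ℝ) (hc : 0 < c) (hcp : c < p) (hα : 0 < α)
    (hq0 : 0 ≤ q) (hq : q ≤ p / (4 * α)) :
    ∀ v : ℝ, 0 ≤ v →
      sInf {y : ℝ | ∃ u : ℝ, 0 ≤ u ∧ y = p * min q u - c * q + α * (u - v) ^ 2}
        = min (α * v ^ 2) (p * q) - c * q := by
  intro v hv
  have hp : 0 < p := hc.trans hcp
  have h4q : 4 * α * q ≤ p := by
    have h4 : 0 < 4 * α := by positivity
    have := (le_div_iff₀ h4).mp hq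
    linarith
  have hlb : ∀ y ∈ {y : ℝ | ∃ u : ℝ, 0 ≤ u ∧ y = p * min q u - c * q + α * (u - v) ^ 2},
      min (α * v ^ 2) (p * q) - c * q ≤ y := by
    rintro y ⟨u, hu, rfl⟩
    rcases le_or_gt q u with h | h
    · rw [min_eq_left h]
      have h1 : min (α * v ^ 2) (p * q) ≤ p * q := min_le_right _ _
      nlinarith [mul_nonneg hα.le (sq_nonneg (u - v))]
    · rw [min_eq_right h.le]
      rcases le_or_gt (2 * α * v) p with h2 | h2
      · have h1 : min (α * v ^ 2) (p * q) ≤ α * v ^ 2 := min_le_left _ _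
        nlinarith [mul_nonneg hu (sub_nonneg.2 h2), mul_nonneg hα.le (sq_nonneg u)]
      · have h1 : min (α * v ^ 2) (p * q) ≤ p * q := min_le_right _ _
        have h3 : p + 4 * α * (q - u) ≤ 4 * α * (v - u) := by nlinarith
        have h4 : 0 ≤ p + 4 * α * (q - u) := by nlinarith
        have h5 : (p + 4 * α * (q - u)) ^ 2 ≤ (4 * α * (v - u)) ^ 2 := by
          exact pow_le_pow_left₀ h4 h3 2
        nlinarith [sq_nonneg (p - 4 * α * (q - u)), sq_nonneg α, mul_pos hα hα]
  have hne : {y : ℝ | ∃ u : ℝ, 0 ≤ u ∧ y = p * min q u - c * q + α * (u - v) ^ 2}.Nonempty :=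
    ⟨_, 0, le_refl 0, rfl⟩
  have hbdd : BddBelow {y : ℝ | ∃ u : ℝ, 0 ≤ u ∧ y = p * min q u - c * q + α * (u - v) ^ 2} :=
    ⟨_, hlb⟩
  have h0mem : (α * v ^ 2 - c * q) ∈
      {y : ℝ | ∃ u : ℝ, 0 ≤ u ∧ y = p * min q u - c * q + α * (u - v) ^ 2} :=
    ⟨0, le_refl 0, by rw [min_eq_right hq0]; ring⟩
  apply le_antisymm
  · rcases le_or_gt q v with hqv | hqv
    · have h1mem : (p * q - c * q) ∈
          {y : ℝ | ∃ u : ℝ, 0 ≤ u ∧ y = p * min q u - c * q + α * (u - v) ^ 2} :=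
        ⟨v, hv, by rw [min_eq_left hqv]; ring⟩
      have e : min (α * v ^ 2) (p * q) - c * q
          = min (α * v ^ 2 - c * q) (p * q - c * q) := by
        rcases min_cases (α * v ^ 2) (p * q) with ⟨h, h'⟩ | ⟨h, h'⟩ <;>
          rcases min_cases (α * v ^ 2 - c * q) (p * q - c * q) with ⟨g, g'⟩ | ⟨g, g'⟩ <;>
          linarith
      rw [e]
      exact le_min (csInf_le hbdd h0mem) (csInf_le hbdd h1mem)
    · have hle : α * v ^ 2 ≤ p * q := by nlinarith [mul_self_lt_mul_self hv hqv, mul_nonneg hα.le hq0, mul_le_mul_of_nonneg_right h4q hq0]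
      rw [min_eq_left hle]
      exact csInf_le hbdd h0mem
  · exact le_csInf hne hlb
end

section
/- For the newsvendor profit function π(q,u) = p·min{q,u} − cq with p > c > 0, α > 0 and q > p/(4α), the function ℓ(α,q,v) = min_{u ≥ 0} { π(q,u) + α(u−v)² } equals αv² − cq for 0 ≤ v ≤ p/(2α), and equals p·min{v − p/(4α), q} − cq for v > p/(2α). -/
/-- For q > p/(4α), the inf-convolution ℓ(α,q,v) = min_{u≥0} {π(q,u) + α(u−v)²}
equals αv² − cq for 0 ≤ v ≤ p/(2α), and p·min{v − p/(4α), q} − cq for v > p/(2α). -/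
theorem stmt_1 (p c α q : ℝ) (hc : 0 < c) (hcp : c < p) (hα : 0 < α)
    (hq : p / (4 * α) < q) :
    (∀ v : ℝ, 0 ≤ v → v ≤ p / (2 * α) →
      sInf {y : ℝ | ∃ u : ℝ, 0 ≤ u ∧ y = p * min q u - c * q + α * (u - v) ^ 2}
        = α * v ^ 2 - c * q) ∧
    (∀ v : ℝ, p / (2 * α) < v →
      sInf {y : ℝ | ∃ u : ℝ, 0 ≤ u ∧ y = p * min q u - c * q + α * (u - v) ^ 2}
        = p * min (v - p / (4 * α)) q - c * q) := by
  have hp : 0 < p := hc.trans hcp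
  have h4 : 0 < 4 * α := by linarith
  have hq' : p < 4 * α * q := by rwa [div_lt_iff₀ h4, mul_comm] at hq
  have hq0 : 0 < q := by nlinarith
  constructor
  · intro v hv0 hv
    have hv' : 2 * α * v ≤ p := by
      rw [le_div_iff₀ (by linarith : (0:ℝ) < 2 * α)] at hv; linarith
    apply IsLeast.csInf_eq
    constructor
    · exact ⟨0, le_refl 0, by rw [min_eq_right hq0.le]; ring⟩
    · rintro y ⟨u, hu, rfl⟩
      rcases le_total q u with h | h
      · rw [min_eq_left h]
        nlinarith [sq_nonneg (2 * α * u - p), mul_nonneg hu (by linarith : 0 ≤ p - 2 * α * v)]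
      · rw [min_eq_right h]
        nlinarith [mul_nonneg hu (by linarith : 0 ≤ p - 2 * α * v), mul_nonneg hu hu]
  · intro v hv
    have hv' : p < 2 * α * v := by
      rw [div_lt_iff₀ (by linarith : (0:ℝ) < 2 * α)] at hv; linarith
    have hd : p / (4 * α) * (4 * α) = p := div_mul_cancel₀ p (by positivity)
    rcases le_total (v - p / (4 * α)) q with h | h
    · rw [min_eq_left h]
      have h' : v - p / (4 * α) ≤ q := h
      have hvq : 4 * α * v - p ≤ 4 * α * q := by nlinarith
      apply IsLeast.csInf_eq
      constructor
      · refine ⟨v - p / (2 * α), by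
          rw [sub_nonneg, div_le_iff₀ (by linarith : (0:ℝ) < 2 * α)]; linarith, ?_⟩
        have hmin : v - p / (2 * α) ≤ q := by
          rw [sub_le_iff_le_add, ← sub_le_iff_le_add',
            le_div_iff₀ (by linarith : (0:ℝ) < 2 * α)]
          nlinarith
        rw [min_eq_right hmin]
        field_simp
        ring
      · rintro y ⟨u, hu, rfl⟩
        rcases le_total q u with h2 | h2
        · rw [min_eq_left h2]
          nlinarith [sq_nonneg (u - v)]
        · rw [min_eq_right h2]
          nlinarith [sq_nonneg (2 * α * (u - v) + p)]
    · rw [min_eq_right h]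
      have hvq : q + p / (4 * α) ≤ v := by linarith
      apply IsLeast.csInf_eq
      constructor
      · refine ⟨v, by nlinarith, ?_⟩
        rw [min_eq_left (by nlinarith : q ≤ v)]; ring
      · rintro y ⟨u, hu, rfl⟩
        rcases le_total q u with h2 | h2
        · rw [min_eq_left h2]; nlinarith [sq_nonneg (u - v)]
        · rw [min_eq_right h2]
          have hd0 : 0 < p / (4 * α) := by positivity
          have h5 : q - u + p / (4 * α) ≤ v - u := by linarith
          have h6 : 0 ≤ q - u + p / (4 * α) := by linarith
          have h7 : α * (q - u + p / (4 * α)) ^ 2 ≤ α * (v - u) ^ 2 := by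
            have := mul_le_mul h5 h5 h6 (by linarith : (0:ℝ) ≤ v - u)
            nlinarith
          nlinarith [h7, mul_nonneg hα.le (sq_nonneg (q - u - p / (4 * α))), hd]
end

section
/- Let μ, σ > 0, p > c > 0, κ = (p−c)/p with κ ≥ σ²/(μ²+σ²), and f(x) = (1−2x)/(2√(x(1−x))). For α₁, α₂ with 0 ≤ α₁ < p/(2(μ − σ√((1−κ)/κ))) ≤ α₂, define q(α₁) = (μ² − σ² + 2μσ f(1−κ))·α₁/p and q(α₂) = μ + σ f(1−κ) − p/(4α₂). Then q(α₁) ≤ q(α₂) ≤ μ + σ f(1−κ). -/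
noncomputable def scarfF (x : ℝ) : ℝ := (1 - 2 * x) / (2 * Real.sqrt (x * (1 - x)))

/-!
Put `s = √((1 - κ) / κ)`, `D = μ - σ s` and `U = μ + σ / s`. Then `f(1 - κ) = (1/s - s) / 2`,
so the Scarf quantity is the mean `(D + U) / 2` and the coefficient of the first regime is the
product `D U`. The threshold `α₁ < p / (2D)` bounds `q(α₁) = D U α₁ / p` by `U / 2`, while
`p / (2D) ≤ α₂` bounds the penalty `p / (4α₂)` by `D / 2`, so that `q(α₂) ≥ U / 2`.
-/

theorem scarfF_one_sub {κ : ℝ} (h0 : 0 < κ) (h1 : κ < 1) :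
    scarfF (1 - κ) = ((√((1 - κ) / κ))⁻¹ - √((1 - κ) / κ)) / 2 := by
  set s := √((1 - κ) / κ)
  have hs0 : 0 < s := Real.sqrt_pos.2 (div_pos (by linarith) h0)
  have hs2 : s ^ 2 = (1 - κ) / κ := Real.sq_sqrt (div_nonneg (by linarith) h0.le)
  have hroot : √((1 - κ) * (1 - (1 - κ))) = κ * s := by
    have : (1 - κ) * (1 - (1 - κ)) = κ ^ 2 * ((1 - κ) / κ) := by
      field_simp
      ring
    rw [this, Real.sqrt_mul (sq_nonneg κ), Real.sqrt_sq h0.le]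
  rw [scarfF, hroot]
  field_simp
  rw [hs2]
  field_simp
  ring

theorem pos_of_nonneg_of_lt_div_two_mul {p D α : ℝ} (hp : 0 < p) (hα : 0 ≤ α)
    (h : α < p / (2 * D)) : 0 < D := by
  have : 0 < 2 * D := (div_pos_iff_of_pos_left hp).1 (hα.trans_lt h)
  linarith

theorem mul_mul_div_le_half {p D U α : ℝ} (hp : 0 < p) (hD : 0 < D) (hU : 0 ≤ U)
    (h : α ≤ p / (2 * D)) : D * U * α / p ≤ U / 2 :=
  calc D * U * α / p ≤ D * U * (p / (2 * D)) / p := by gcongr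
    _ = U / 2 := by field_simp

theorem half_le_mean_sub_div {p D U α : ℝ} (hp : 0 < p) (hD : 0 < D)
    (h : p / (2 * D) ≤ α) : U / 2 ≤ (D + U) / 2 - p / (4 * α) := by
  have hα : 0 < α := (div_pos hp (by linarith)).trans_le h
  have : p / (4 * α) ≤ D / 2 := by
    rw [div_le_div_iff₀ (by linarith) two_pos]
    rw [div_le_iff₀ (by linarith)] at h
    linarith
  linarith

theorem stmt_4_general (p c μ σ κ α₁ α₂ : ℝ) (hc : 0 < c) (hcp : c < p) (hσ : 0 < σ)
    (hκ : κ = (p - c) / p)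
    (h1 : 0 ≤ α₁)
    (h2 : α₁ < p / (2 * (μ - σ * Real.sqrt ((1 - κ) / κ))))
    (h3 : p / (2 * (μ - σ * Real.sqrt ((1 - κ) / κ))) ≤ α₂) :
    (μ ^ 2 - σ ^ 2 + 2 * μ * σ * scarfF (1 - κ)) * α₁ / p
        ≤ μ + σ * scarfF (1 - κ) - p / (4 * α₂) ∧
    μ + σ * scarfF (1 - κ) - p / (4 * α₂) ≤ μ + σ * scarfF (1 - κ) := by
  have hp : 0 < p := hc.trans hcp
  have hκ0 : 0 < κ := hκ ▸ div_pos (sub_pos.2 hcp) hp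
  have hκ1 : κ < 1 := hκ ▸ (div_lt_one hp).2 (by linarith)
  rw [scarfF_one_sub hκ0 hκ1]
  set s := √((1 - κ) / κ)
  have hs : 0 < s := Real.sqrt_pos.2 (div_pos (by linarith) hκ0)
  have hD : 0 < μ - σ * s := pos_of_nonneg_of_lt_div_two_mul hp h1 h2
  have hU : 0 < μ + σ * s⁻¹ := by
    have : 0 < σ * s + σ * s⁻¹ := by positivity
    linarith
  have hmean : μ + σ * ((s⁻¹ - s) / 2) = ((μ - σ * s) + (μ + σ * s⁻¹)) / 2 := by ring
  have hprod : μ ^ 2 - σ ^ 2 + 2 * μ * σ * ((s⁻¹ - s) / 2)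
      = (μ - σ * s) * (μ + σ * s⁻¹) := by
    field_simp
    ring
  have hα₂ : 0 < α₂ := (div_pos hp (by linarith)).trans_le h3
  rw [hmean, hprod]
  exact ⟨(mul_mul_div_le_half hp hD hU.le h2.le).trans (half_le_mean_sub_div hp hD h3),
    sub_le_self _ (by positivity)⟩

/-- Monotone ordering of the misspecification-averse optimal order quantities in the
two regimes of α, bounded above by the Scarf quantity μ + σ f(1−κ). -/
theorem stmt_4 (p c μ σ κ α₁ α₂ : ℝ) (hc : 0 < c) (hcp : c < p) (hμ : 0 < μ) (hσ : 0 < σ)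
    (hκ : κ = (p - c) / p) (hnd : σ ^ 2 / (μ ^ 2 + σ ^ 2) ≤ κ)
    (h1 : 0 ≤ α₁)
    (h2 : α₁ < p / (2 * (μ - σ * Real.sqrt ((1 - κ) / κ))))
    (h3 : p / (2 * (μ - σ * Real.sqrt ((1 - κ) / κ))) ≤ α₂) :
    (μ ^ 2 - σ ^ 2 + 2 * μ * σ * scarfF (1 - κ)) * α₁ / p
        ≤ μ + σ * scarfF (1 - κ) - p / (4 * α₂) ∧
    μ + σ * scarfF (1 - κ) - p / (4 * α₂) ≤ μ + σ * scarfF (1 - κ) :=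
  stmt_4_general p c μ σ κ α₁ α₂ hc hcp hσ hκ h1 h2 h3
end

section
/- Let p > c > 0, α > 0, μ, σ > 0, κ = (p−c)/p. Define L(q) = (α/2)(pq/α + μ² + σ² − √((pq/α + μ² + σ²)² − 4μ²·pq/α)) − cq for q ≥ 0. Then the unique stationary point of L obtained from the first-order condition L'(q) = 0 in the regime κ ≥ σ²/(μ²+σ²) is q* = (μ² − σ² + 2μσ·f(1−κ))·α/p, where f(x) = (1−2x)/(2√(x(1−x))). -/
/-!
With `u = p q / α` the radicand is `(u - μ² + σ²)² + (2 μ σ)²`, so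
`L'(q) = (p / 2) (1 - A / √(A² + (2 μ σ)²)) - c` where `A = u - μ² + σ²`. Stationarity says
`A / √(A² + (2 μ σ)²) = 1 - 2 c / p`. The map `a ↦ a / √(a² + m²)` is injective and sends
`m f(x)` to `1 - 2 x` for `0 < x < 1`, hence `A = 2 μ σ f(c / p)`, and `c / p = 1 - κ`.
-/

open Real

theorem div_sqrt_sq_add_sq_injective {m : ℝ} (hm : m ≠ 0) :
    Function.Injective fun a : ℝ => a / √(a ^ 2 + m ^ 2) := by
  intro a b hab
  have hpos : ∀ x : ℝ, 0 < √(x ^ 2 + m ^ 2) := fun x => sqrt_pos.mpr (by positivity)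
  have hsq : ∀ x : ℝ, √(x ^ 2 + m ^ 2) ^ 2 = x ^ 2 + m ^ 2 := fun x => sq_sqrt (by positivity)
  have hcross : a * √(b ^ 2 + m ^ 2) = b * √(a ^ 2 + m ^ 2) := by
    simpa only [div_eq_div_iff (hpos a).ne' (hpos b).ne'] using hab
  have hab_sq : a ^ 2 = b ^ 2 := by
    have h := congrArg (· ^ 2) hcross
    simp only [mul_pow, hsq] at h
    have : (a ^ 2 - b ^ 2) * m ^ 2 = 0 := by linear_combination h
    simpa [sub_eq_zero, hm] using this
  rcases sq_eq_sq_iff_eq_or_eq_neg.mp hab_sq with h | h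
  · exact h
  · rw [h, neg_sq] at hcross
    have : b = 0 := by nlinarith [hpos b]
    simp [h, this]

theorem hasDerivAt_sqrt_sq_add_sq {m : ℝ} (hm : m ≠ 0) (x : ℝ) :
    HasDerivAt (fun y => √(y ^ 2 + m ^ 2)) (x / √(x ^ 2 + m ^ 2)) x := by
  have h := ((hasDerivAt_pow 2 x).add_const (m ^ 2)).sqrt (by positivity)
  convert h using 1
  field_simp
  ring

theorem mul_scarfF_div_sqrt {m x : ℝ} (hm : 0 < m) (hx0 : 0 < x) (hx1 : x < 1) :
    m * scarfF x / √((m * scarfF x) ^ 2 + m ^ 2) = 1 - 2 * x := by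
  have hs : 0 < √(x * (1 - x)) := sqrt_pos.mpr (by nlinarith)
  have hs2 : √(x * (1 - x)) ^ 2 = x * (1 - x) := sq_sqrt (by nlinarith)
  -- since `(1 - 2x)² + 4x(1 - x) = 1`
  have hnorm : (m * scarfF x) ^ 2 + m ^ 2 = (m / (2 * √(x * (1 - x)))) ^ 2 := by
    rw [scarfF]; field_simp; rw [hs2]; ring
  rw [hnorm, sqrt_sq (by positivity), scarfF]
  field_simp

theorem div_sqrt_sq_add_sq_eq_iff {m x a : ℝ} (hm : 0 < m) (hx0 : 0 < x) (hx1 : x < 1) :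
    a / √(a ^ 2 + m ^ 2) = 1 - 2 * x ↔ a = m * scarfF x := by
  rw [← mul_scarfF_div_sqrt hm hx0 hx1]
  exact (div_sqrt_sq_add_sq_injective hm.ne').eq_iff

noncomputable def transformedProfit (p c α μ σ q : ℝ) : ℝ :=
  (α / 2) * (p * q / α + μ ^ 2 + σ ^ 2
    - √((p * q / α + μ ^ 2 + σ ^ 2) ^ 2 - 4 * μ ^ 2 * (p * q / α))) - c * q

section

variable {p c α μ σ : ℝ}

theorem transformedProfit_eq :
    transformedProfit p c α μ σ = fun q => (α / 2) * (p * q / α + μ ^ 2 + σ ^ 2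
      - √((p * q / α - μ ^ 2 + σ ^ 2) ^ 2 + (2 * μ * σ) ^ 2)) - c * q := by
  funext q
  rw [transformedProfit]
  ring_nf

theorem hasDerivAt_transformedProfit (hα : α ≠ 0) (hμ : μ ≠ 0) (hσ : σ ≠ 0) (q : ℝ) :
    HasDerivAt (transformedProfit p c α μ σ)
      (p / 2 * (1 - (p * q / α - μ ^ 2 + σ ^ 2)
        / √((p * q / α - μ ^ 2 + σ ^ 2) ^ 2 + (2 * μ * σ) ^ 2)) - c) q := by
  have hu : HasDerivAt (fun q => p * q / α) (p / α) q := by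
    simpa using ((hasDerivAt_id q).const_mul p).div_const α
  have hS := (hasDerivAt_sqrt_sq_add_sq (by positivity : 2 * μ * σ ≠ 0) _).comp q
    ((hu.sub_const (μ ^ 2)).add_const (σ ^ 2))
  rw [transformedProfit_eq]
  refine (((((hu.add_const (μ ^ 2)).add_const (σ ^ 2)).sub hS).const_mul (α / 2)).sub
    ((hasDerivAt_id q).const_mul c)).congr_deriv ?_
  field_simp

theorem deriv_transformedProfit_eq_zero_iff (hc : 0 < c) (hcp : c < p) (hα : α ≠ 0)
    (hμ : 0 < μ) (hσ : 0 < σ) (q : ℝ) :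
    deriv (transformedProfit p c α μ σ) q = 0 ↔
      p * q / α - μ ^ 2 + σ ^ 2 = 2 * μ * σ * scarfF (c / p) := by
  have hp : 0 < p := hc.trans hcp
  rw [(hasDerivAt_transformedProfit hα hμ.ne' hσ.ne' q).deriv,
    ← div_sqrt_sq_add_sq_eq_iff (by positivity) (div_pos hc hp) ((div_lt_one hp).mpr hcp)]
  constructor <;> intro h <;> field_simp at h ⊢ <;> linarith

end

theorem stmt_7_general (p c α μ σ κ : ℝ) (hc : 0 < c) (hcp : c < p) (hα : 0 < α)
    (hμ : 0 < μ) (hσ : 0 < σ) (hκ : κ = (p - c) / p) :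
    let L : ℝ → ℝ := fun q => (α / 2) * (p * q / α + μ ^ 2 + σ ^ 2
        - Real.sqrt ((p * q / α + μ ^ 2 + σ ^ 2) ^ 2 - 4 * μ ^ 2 * (p * q / α))) - c * q
    let qstar : ℝ := (μ ^ 2 - σ ^ 2 + 2 * μ * σ * scarfF (1 - κ)) * α / p
    deriv L qstar = 0 ∧ ∀ q : ℝ, 0 < q → deriv L q = 0 → q = qstar := by
  intro L qstar
  have hp : 0 < p := hc.trans hcp
  have hκc : 1 - κ = c / p := by rw [hκ]; field_simp; ring
  have stationary_iff : ∀ q, deriv L q = 0 ↔ q = qstar := by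
    intro q
    change deriv (transformedProfit p c α μ σ) q = 0 ↔
      q = (μ ^ 2 - σ ^ 2 + 2 * μ * σ * scarfF (1 - κ)) * α / p
    rw [deriv_transformedProfit_eq_zero_iff hc hcp hα.ne' hμ hσ, hκc, eq_div_iff hp.ne']
    constructor <;> intro h <;> field_simp at h ⊢ <;> linarith
  exact ⟨(stationary_iff qstar).mpr rfl, fun q _ => (stationary_iff q).mp⟩

/-- The unique stationary point of
L(q) = (α/2)(pq/α + μ² + σ² − √((pq/α + μ² + σ²)² − 4μ²·pq/α)) − cq
in the regime κ ≥ σ²/(μ²+σ²) is q* = (μ² − σ² + 2μσ f(1−κ))·α/p. -/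
theorem stmt_7 (p c α μ σ κ : ℝ) (hc : 0 < c) (hcp : c < p) (hα : 0 < α)
    (hμ : 0 < μ) (hσ : 0 < σ) (hκ : κ = (p - c) / p)
    (hnd : σ ^ 2 / (μ ^ 2 + σ ^ 2) ≤ κ) :
    let L : ℝ → ℝ := fun q => (α / 2) * (p * q / α + μ ^ 2 + σ ^ 2
        - Real.sqrt ((p * q / α + μ ^ 2 + σ ^ 2) ^ 2 - 4 * μ ^ 2 * (p * q / α))) - c * q
    let qstar : ℝ := (μ ^ 2 - σ ^ 2 + 2 * μ * σ * scarfF (1 - κ)) * α / p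
    deriv L qstar = 0 ∧ ∀ q : ℝ, 0 < q → deriv L q = 0 → q = qstar :=
  stmt_7_general p c α μ σ κ hc hcp hα hμ hσ hκ
end

section
/- Let p > c > 0, α > 0, μ, σ > 0, κ = (p−c)/p. Define L(q) = (p/2)(q + μ − p/(4α) − √((q − μ + p/(4α))² + σ²)) − cq for q ≥ 0. Then L is concave and its stationary point from L'(q) = 0 is q* = μ + σ·(2κ−1)/(2√(κ(1−κ))) − p/(4α). -/
/-! √((q - m)² + b²) is the modulus of the complex number (q - m) + b i, which depends affinely
on q, so it is convex and `L`, an affine function minus `p / 2` times it, is concave. The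
derivative of `L` is `p / 2 * (1 - u / √(u² + σ²)) - c` with `u = q - μ + p / (4α)`. At `q*`,
`u = σ t / √(1 - t²)` for `t = 2κ - 1`, since `1 - t² = 4κ(1 - κ)`; this inverts
`u ↦ u / √(u² + σ²)`, so the derivative there is `p (1 - κ) - c = 0`. -/

open Real Set

theorem convexOn_sqrt_sub_sq_add_sq (m b : ℝ) :
    ConvexOn ℝ univ (fun x : ℝ => √((x - m) ^ 2 + b ^ 2)) := by
  have hnorm : (fun x : ℝ => √((x - m) ^ 2 + b ^ 2)) =
      norm ∘ AffineMap.lineMap (⟨-m, b⟩ : ℂ) ⟨1 - m, b⟩ := by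
    funext x
    rw [Function.comp_apply, Complex.norm_eq_sqrt_sq_add_sq]
    simp [AffineMap.lineMap_apply, ← sub_eq_add_neg]
  rw [hnorm]
  simpa using (convexOn_norm convex_univ).comp_affineMap _

theorem concaveOn_affine_sub_mul_sqrt {k : ℝ} (hk : 0 ≤ k) (a d m b : ℝ) :
    ConcaveOn ℝ univ (fun x : ℝ => a * x + d - k * √((x - m) ^ 2 + b ^ 2)) :=
  (((LinearMap.mulLeft ℝ a).concaveOn convex_univ).add_const d).sub
    ((convexOn_sqrt_sub_sq_add_sq m b).smul hk)

theorem HasDerivAt.sqrt_sq_add_sq {f : ℝ → ℝ} {x : ℝ} (hf : HasDerivAt f 1 x) {b : ℝ}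
    (hb : b ≠ 0) :
    HasDerivAt (fun y => √(f y ^ 2 + b ^ 2)) (f x / √(f x ^ 2 + b ^ 2)) x := by
  have hpos : 0 < f x ^ 2 + b ^ 2 := by positivity
  convert ((hf.fun_pow 2).add_const (b ^ 2)).sqrt hpos.ne' using 1
  field_simp
  ring

theorem div_sqrt_sq_add_sq_of_eq {t σ u : ℝ} (ht : t ^ 2 < 1) (hσ : 0 < σ)
    (hu : u = σ * t / √(1 - t ^ 2)) : u / √(u ^ 2 + σ ^ 2) = t := by
  have hs : 0 < √(1 - t ^ 2) := sqrt_pos.2 (by linarith)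
  have hs2 : √(1 - t ^ 2) ^ 2 = 1 - t ^ 2 := sq_sqrt (by linarith)
  have hr : √(u ^ 2 + σ ^ 2) = σ / √(1 - t ^ 2) := by
    rw [← sqrt_sq (by positivity : 0 ≤ σ / √(1 - t ^ 2))]
    congr 1
    rw [hu]
    field_simp
    rw [hs2]
    ring
  rw [hr, hu]
  field_simp

theorem stmt_8_general (p c α μ σ κ : ℝ) (hc : 0 < c) (hcp : c < p) (hσ : 0 < σ) (hκ : κ = (p - c) / p) :
    let L : ℝ → ℝ := fun q => (p / 2) * (q + μ - p / (4 * α)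
        - Real.sqrt ((q - μ + p / (4 * α)) ^ 2 + σ ^ 2)) - c * q
    let qstar : ℝ := μ + σ * (2 * κ - 1) / (2 * Real.sqrt (κ * (1 - κ))) - p / (4 * α)
    ConcaveOn ℝ (Set.Ici 0) L ∧ deriv L qstar = 0 := by
  intro L qstar
  have hp : 0 < p := hc.trans hcp
  constructor
  · have hL_eq : L = fun q => (p / 2 - c) * q + p / 2 * (μ - p / (4 * α))
        - p / 2 * √((q - (μ - p / (4 * α))) ^ 2 + σ ^ 2) := by
      funext q
      simp only [L, sub_add]
      ring
    rw [hL_eq]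
    exact (concaveOn_affine_sub_mul_sqrt (by positivity) _ _ _ _).subset (subset_univ _)
      (convex_Ici 0)
  · have hκ0 : 0 < κ := by rw [hκ]; exact div_pos (by linarith) hp
    have hκ1 : κ < 1 := by rw [hκ, div_lt_one hp]; linarith
    set u := qstar - μ + p / (4 * α)
    have hu : u = σ * (2 * κ - 1) / √(1 - (2 * κ - 1) ^ 2) := by
      rw [show 1 - (2 * κ - 1) ^ 2 = 2 ^ 2 * (κ * (1 - κ)) by ring, sqrt_mul (by norm_num),
        sqrt_sq (by norm_num)]
      simp only [u, qstar]
      ring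
    have hsqrt := (((hasDerivAt_id' qstar).sub_const μ).add_const (p / (4 * α))).sqrt_sq_add_sq
      hσ.ne'
    have hL : HasDerivAt L (p / 2 * (1 - u / √(u ^ 2 + σ ^ 2)) - c * 1) qstar :=
      ((((hasDerivAt_id' qstar).add_const μ).sub_const _).sub hsqrt).const_mul (p / 2)
        |>.sub ((hasDerivAt_id' qstar).const_mul c)
    rw [hL.deriv, div_sqrt_sq_add_sq_of_eq (by nlinarith) hσ hu, hκ]
    field_simp
    ring

/-- L(q) = (p/2)(q + μ − p/(4α) − √((q − μ + p/(4α))² + σ²)) − cq is concave on [0,∞)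
and its stationary point is q* = μ + σ(2κ−1)/(2√(κ(1−κ))) − p/(4α). -/
theorem stmt_8 (p c α μ σ κ : ℝ) (hc : 0 < c) (hcp : c < p) (hα : 0 < α)
    (hμ : 0 < μ) (hσ : 0 < σ) (hκ : κ = (p - c) / p) :
    let L : ℝ → ℝ := fun q => (p / 2) * (q + μ - p / (4 * α)
        - Real.sqrt ((q - μ + p / (4 * α)) ^ 2 + σ ^ 2)) - c * q
    let qstar : ℝ := μ + σ * (2 * κ - 1) / (2 * Real.sqrt (κ * (1 - κ))) - p / (4 * α)
    ConcaveOn ℝ (Set.Ici 0) L ∧ deriv L qstar = 0 :=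
  stmt_8_general p c α μ σ κ hc hcp hσ hκ
end

section
/- Let p > c > 0 and μ, σ > 0 with κ = (p−c)/p ≥ σ²/(μ²+σ²) and κ ≥ 1/2. For fixed α > 0, the function σ ↦ q_α(σ), where q_α(σ) = μ + σ f(1−κ) − p/(4α) if σ ≤ (μ − p/(2α))√(κ/(1−κ)), and q_α(σ) = (μ² − σ² + 2μσ f(1−κ))·α/p otherwise, is decreasing on the interval [max{(μ−p/(2α))√(κ/(1−κ)), μ f(1−κ)}, μ√(κ/(1−κ))], where f(x) = (1−2x)/(2√(x(1−x))). -/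
/-! On the interval every σ is at least the kink `A = (μ - p/(2α))·√(κ/(1-κ))`, where the
two branches agree, so the order quantity is the concave quadratic branch there. That
quadratic peaks at `μ·f(1-κ)`, which does not exceed the left endpoint, and hence decreases
on the interval. The agreement at the kink rests on the identity `f(x) = (r - r⁻¹)/2` with
`r = √((1-x)/x)`. -/

open Set

lemma scarfF_eq_half_sub_inv {x : ℝ} (hx0 : 0 < x) (hx1 : x < 1) :
    scarfF x = (Real.sqrt ((1 - x) / x) - (Real.sqrt ((1 - x) / x))⁻¹) / 2 := by
  set r := Real.sqrt ((1 - x) / x)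
  have hr2 : r ^ 2 = (1 - x) / x := Real.sq_sqrt (div_pos (by linarith) hx0).le
  have hr : 0 < r := Real.sqrt_pos.mpr (div_pos (by linarith) hx0)
  have hsqrt : Real.sqrt (x * (1 - x)) = x * r := by
    rw [Real.sqrt_eq_iff_mul_self_eq_of_pos (by positivity), mul_mul_mul_comm, ← sq r, hr2]
    field_simp
  rw [scarfF, hsqrt]
  field_simp
  rw [hr2]
  field_simp
  ring

lemma two_mul_scarfF_one_sub_mul_sqrt {κ : ℝ} (hκ0 : 0 < κ) (hκ1 : κ < 1) :
    2 * scarfF (1 - κ) * Real.sqrt (κ / (1 - κ)) = Real.sqrt (κ / (1 - κ)) ^ 2 - 1 := by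
  have hs : Real.sqrt (κ / (1 - κ)) ≠ 0 := by
    have : 0 < κ / (1 - κ) := div_pos hκ0 (by linarith)
    positivity
  rw [scarfF_eq_half_sub_inv (by linarith) (by linarith), sub_sub_cancel]
  field_simp

lemma antitoneOn_quadratic_branch (μ f α p : ℝ) (hα : 0 ≤ α) (hp : 0 ≤ p) :
    AntitoneOn (fun σ => (μ ^ 2 - σ ^ 2 + 2 * μ * σ * f) * α / p) (Ici (μ * f)) := by
  intro u hu v _ huv
  simp only [mul_div_assoc]
  gcongr ?_ * _
  have hsum : 0 ≤ u + v - 2 * (μ * f) := by linarith [mem_Ici.mp hu]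
  nlinarith [mul_nonneg (sub_nonneg.mpr huv) hsum]

lemma eqOn_ite_le_of_eq {X Y : Type*} [LinearOrder X] {a : X} {h₁ h₂ : X → Y}
    (ha : h₁ a = h₂ a) :
    EqOn (fun σ => if σ ≤ a then h₁ σ else h₂ σ) h₂ (Ici a) := by
  intro σ hσ
  dsimp only
  split_ifs with h
  · rwa [le_antisymm h hσ]
  · rfl

lemma branches_eq_at_kink {μ f s p α A : ℝ} (hp : p ≠ 0) (hα : α ≠ 0)
    (hfs : 2 * f * s = s ^ 2 - 1) (hA : A = (μ - p / (2 * α)) * s) :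
    μ + A * f - p / (4 * α) = (μ ^ 2 - A ^ 2 + 2 * μ * A * f) * α / p := by
  subst hA
  field_simp
  linear_combination (-4 * (2 * α * μ - p) ^ 2) * hfs

theorem stmt_9_general (p c μ α κ : ℝ) (hc : 0 < c) (hcp : c < p) (hα : 0 < α)
    (hκ : κ = (p - c) / p) :
    let g : ℝ → ℝ := fun σ =>
      if σ ≤ (μ - p / (2 * α)) * Real.sqrt (κ / (1 - κ)) then
        μ + σ * scarfF (1 - κ) - p / (4 * α)
      else (μ ^ 2 - σ ^ 2 + 2 * μ * σ * scarfF (1 - κ)) * α / p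
    AntitoneOn g (Set.Icc
      (max ((μ - p / (2 * α)) * Real.sqrt (κ / (1 - κ))) (μ * scarfF (1 - κ)))
      (μ * Real.sqrt (κ / (1 - κ)))) := by
  intro g
  have hp : 0 < p := hc.trans hcp
  have hκ0 : 0 < κ := hκ ▸ div_pos (by linarith) hp
  have hκ1 : κ < 1 := hκ ▸ (div_lt_one hp).mpr (by linarith)
  have hkink := branches_eq_at_kink (μ := μ) hp.ne' hα.ne'
    (two_mul_scarfF_one_sub_mul_sqrt hκ0 hκ1) rfl
  refine ((antitoneOn_quadratic_branch μ _ α p hα.le hp.le).mono ?_).congr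
    ((eqOn_ite_le_of_eq hkink).symm.mono ?_)
  · exact fun σ hσ => le_of_max_le_right hσ.1
  · exact fun σ hσ => le_of_max_le_left hσ.1

/-- Sensitivity to variance: for κ ≥ 1/2, the misspecification-averse optimal
order quantity, viewed as a function of σ, is decreasing on the tail of the
non-degenerate range [max{(μ−p/(2α))√(κ/(1−κ)), μ f(1−κ)}, μ√(κ/(1−κ))]. -/
theorem stmt_9 (p c μ α κ : ℝ) (hc : 0 < c) (hcp : c < p) (hμ : 0 < μ) (hα : 0 < α)
    (hκ : κ = (p - c) / p) (hhalf : 1 / 2 ≤ κ) :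
    let g : ℝ → ℝ := fun σ =>
      if σ ≤ (μ - p / (2 * α)) * Real.sqrt (κ / (1 - κ)) then
        μ + σ * scarfF (1 - κ) - p / (4 * α)
      else (μ ^ 2 - σ ^ 2 + 2 * μ * σ * scarfF (1 - κ)) * α / p
    AntitoneOn g (Set.Icc
      (max ((μ - p / (2 * α)) * Real.sqrt (κ / (1 - κ))) (μ * scarfF (1 - κ)))
      (μ * Real.sqrt (κ / (1 - κ)))) :=
  stmt_9_general p c μ α κ hc hcp hα hκ
end

section
/- Let p > c > 0, μ > 0, α > 0, λ > 0 with λ ≤ c/(2μ). Define q*(λ,α) = λ(λ+α)pμ²/(α(λp/α + c)²). Then the function α ↦ q*(λ,α) − p/(4α) is increasing on (0,∞), its limit as α → ∞ equals λpμ²/c², and consequently q*(λ,α) ≤ p/(4α) + p/(4λ) for all α > 0. -/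
/-- With λ ≤ c/(2μ), the map α ↦ q*(λ,α) − p/(4α) with
q*(λ,α) = λ(λ+α)pμ²/(α(λp/α + c)²) is increasing on (0,∞), tends to λpμ²/c²
as α → ∞, and hence q*(λ,α) ≤ p/(4α) + p/(4λ) for all α > 0. -/
theorem stmt_16 (p c μ lam : ℝ) (hc : 0 < c) (hcp : c < p) (hμ : 0 < μ)
    (hlam : 0 < lam) (hle : lam ≤ c / (2 * μ)) :
    let q : ℝ → ℝ := fun α => lam * (lam + α) * p * μ ^ 2 / (α * (lam * p / α + c) ^ 2)
    MonotoneOn (fun α => q α - p / (4 * α)) (Set.Ioi 0) ∧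
    Filter.Tendsto (fun α => q α - p / (4 * α)) Filter.atTop
      (nhds (lam * p * μ ^ 2 / c ^ 2)) ∧
    ∀ α : ℝ, 0 < α → q α ≤ p / (4 * α) + p / (4 * lam) := by
  intro q
  have hp : 0 < p := hc.trans hcp
  -- rewrite q in a denominator-friendly form
  have hq : ∀ α : ℝ, 0 < α →
      q α = lam * p * μ ^ 2 * (α * (lam + α)) / (lam * p + c * α) ^ 2 := by
    intro α hα
    show lam * (lam + α) * p * μ ^ 2 / (α * (lam * p / α + c) ^ 2) = _
    have h1 : α ≠ 0 := hα.ne'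
    have h2 : lam * p + c * α ≠ 0 := by positivity
    field_simp
  have key : ∀ a b : ℝ, 0 < a → a ≤ b →
      q a - p / (4 * a) ≤ q b - p / (4 * b) := by
    intro a b ha hab
    have hb : 0 < b := ha.trans_le hab
    rw [hq a ha, hq b hb]
    have hda : 0 < (lam * p + c * a) ^ 2 := by positivity
    have hdb : 0 < (lam * p + c * b) ^ 2 := by positivity
    have h1 : lam * p * μ ^ 2 * (a * (lam + a)) / (lam * p + c * a) ^ 2 ≤
        lam * p * μ ^ 2 * (b * (lam + b)) / (lam * p + c * b) ^ 2 := by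
      rw [div_le_div_iff₀ hda hdb]
      have hinner : (0:ℝ) ≤ lam * (b - a) * (lam * p ^ 2 * (lam + a + b) + a * b * c * (2 * p - c)) := by
        have h1 : (0:ℝ) ≤ a * b * c * (2 * p - c) := by
          have : (0:ℝ) ≤ 2 * p - c := by linarith
          positivity
        have h2 : (0:ℝ) ≤ lam * p ^ 2 * (lam + a + b) := by positivity
        have h3 : (0:ℝ) ≤ lam * (b - a) := by nlinarith
        nlinarith
      nlinarith [mul_nonneg (mul_nonneg (mul_nonneg hlam.le hp.le) (sq_nonneg μ)) hinner]
    have h2 : p / (4 * b) ≤ p / (4 * a) := by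
      apply div_le_div_of_nonneg_left hp.le (by linarith)
      linarith
    linarith
  have hmono : MonotoneOn (fun α => q α - p / (4 * α)) (Set.Ioi 0) := by
    intro a ha b _ hab
    exact key a b ha hab
  -- limit
  have htend : Filter.Tendsto (fun α => q α - p / (4 * α)) Filter.atTop
      (nhds (lam * p * μ ^ 2 / c ^ 2)) := by
    have hinv : Filter.Tendsto (fun α : ℝ => α⁻¹) Filter.atTop (nhds 0) :=
      tendsto_inv_atTop_zero
    have hnum : Filter.Tendsto (fun α : ℝ => lam * p * μ ^ 2 * (lam * α⁻¹ + 1))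
        Filter.atTop (nhds (lam * p * μ ^ 2 * (lam * 0 + 1))) :=
      tendsto_const_nhds.mul (((tendsto_const_nhds.mul hinv)).add tendsto_const_nhds)
    have hden : Filter.Tendsto (fun α : ℝ => (lam * p * α⁻¹ + c) ^ 2)
        Filter.atTop (nhds ((lam * p * 0 + c) ^ 2)) :=
      (((tendsto_const_nhds.mul hinv)).add tendsto_const_nhds).pow 2
    have hlast : Filter.Tendsto (fun α : ℝ => p / (4 * α)) Filter.atTop (nhds 0) := by
      have := hinv.const_mul (p / 4)
      rw [mul_zero] at this
      refine this.congr fun α => ?_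
      rw [div_eq_mul_inv, div_eq_mul_inv, mul_inv]
      ring
    have hcomb := (hnum.div hden (by positivity)).sub hlast
    have hval : lam * p * μ ^ 2 * (lam * 0 + 1) / (lam * p * 0 + c) ^ 2 - 0
        = lam * p * μ ^ 2 / c ^ 2 := by ring
    rw [hval] at hcomb
    refine hcomb.congr' ?_
    filter_upwards [Filter.eventually_gt_atTop (0:ℝ)] with α hα
    rw [hq α hα]
    simp only [Pi.div_apply]
    congr 1
    have h1 : α ≠ 0 := hα.ne'
    have h2 : lam * p + c * α ≠ 0 := by positivity
    have h3 : lam * p * α⁻¹ + c ≠ 0 := by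
      have : (0:ℝ) < lam * p * α⁻¹ + c := by positivity
      exact this.ne'
    field_simp
  refine ⟨hmono, htend, ?_⟩
  intro α hα
  have hbound : q α - p / (4 * α) ≤ lam * p * μ ^ 2 / c ^ 2 := by
    apply ge_of_tendsto htend
    filter_upwards [Filter.eventually_ge_atTop α] with β hβ
    exact key α β hα hβ
  have hfin : lam * p * μ ^ 2 / c ^ 2 ≤ p / (4 * lam) := by
    rw [div_le_div_iff₀ (by positivity) (by positivity)]
    have h2 : 2 * μ * lam ≤ c := by
      rw [le_div_iff₀ (by positivity)] at hle; linarith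
    nlinarith [mul_le_mul h2 h2 (by positivity : (0:ℝ) ≤ 2 * μ * lam) hc.le,
      mul_pos hp (mul_pos hμ hlam), hp.le, sq_nonneg (μ * lam)]
  linarith
end

section
/- Let p > c > 0 and α > 0, and let π(q,v) = p·min{q,v} − cq. For any probability distribution G on ℝ₊, sup over functions χ with ‖χ‖_∞ ≤ 1 of [ inf_{v≥0}(π(q,v) + αχ(v)) − α·E_G[χ(ṽ)] ] equals E_G[min{pq, 2α, pṽ}] − cq. -/
/-!
For a penalty `χ` with `|χ| ≤ 1`, the inner infimum `I` of `f + αχ` over `s` is at most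
`f x + αχ x` and at most `f x₀ + αχ x₀ ≤ f x₀ + α`, where `x₀` minimises `f` on `s`. Hence
`I - αχ x ≤ min (f x) (f x₀ + 2α)` on `s`, and integrating bounds every dual value by
`E[min (f, f x₀ + 2α)]`. The bound is attained by `χ⋆ = 1 - e/α`, where `e` is the excess
`f - f x₀` clamped to `[0, 2α]`. For the newsvendor profit `π(q, ·)` on `v ≥ 0` the minimum is
`-cq`, at `v = 0`, and `min (π(q, v)) (-cq + 2α) = min (pq) (2α) (pv) - cq`.
-/

open MeasureTheory

namespace TVDual

variable {X : Type*} {f χ : X → ℝ} {s : Set X} {x₀ x : X} {α : ℝ}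

def clampedExcess (f : X → ℝ) (x₀ : X) (α : ℝ) (x : X) : ℝ :=
  max 0 (min (f x - f x₀) (2 * α))

lemma clampedExcess_nonneg : 0 ≤ clampedExcess f x₀ α x := le_max_left _ _

lemma clampedExcess_le (hα : 0 ≤ α) : clampedExcess f x₀ α x ≤ 2 * α :=
  max_le (by linarith) (min_le_right _ _)

lemma clampedExcess_self : clampedExcess f x₀ α x₀ = 0 :=
  max_eq_left ((min_le_left _ _).trans (sub_self _).le)

lemma clampedExcess_eq_min (hα : 0 ≤ α) (hmin : IsMinOn f s x₀) (hx : x ∈ s) :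
    clampedExcess f x₀ α x = min (f x - f x₀) (2 * α) :=
  max_eq_right (le_min (sub_nonneg.2 (hmin hx)) (by linarith))

lemma clampedExcess_le_sub (hmin : IsMinOn f s x₀) (hx : x ∈ s) :
    clampedExcess f x₀ α x ≤ f x - f x₀ :=
  max_le (sub_nonneg.2 (hmin hx)) (min_le_left _ _)

lemma bddBelow_penalized (hα : 0 ≤ α) (hmin : IsMinOn f s x₀) (hχ : ∀ x, |χ x| ≤ 1) :
    BddBelow {z | ∃ x, x ∈ s ∧ z = f x + α * χ x} := by
  refine ⟨f x₀ - α, ?_⟩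
  rintro _ ⟨x, hx, rfl⟩
  have : f x₀ ≤ f x := hmin hx
  nlinarith [(abs_le.mp (hχ x)).1]

lemma sInf_penalized_sub_le (hα : 0 ≤ α) (hx₀ : x₀ ∈ s) (hmin : IsMinOn f s x₀)
    (hχ : ∀ x, |χ x| ≤ 1) (hx : x ∈ s) :
    sInf {z | ∃ x, x ∈ s ∧ z = f x + α * χ x} - α * χ x ≤ f x₀ + clampedExcess f x₀ α x := by
  have hbdd := bddBelow_penalized hα hmin hχ
  have hle_x := csInf_le hbdd ⟨x, hx, rfl⟩
  have hle_x₀ := csInf_le hbdd ⟨x₀, hx₀, rfl⟩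
  rw [clampedExcess_eq_min hα hmin hx, ← min_add_add_left]
  refine le_min (by linarith) ?_
  nlinarith [(abs_le.mp (hχ x)).1, (abs_le.mp (hχ x₀)).2]

/-- `f + α χ⋆` equals `f x₀ + α` where `f ≤ f x₀ + 2α` and exceeds it elsewhere on `s`, so the
inner infimum is attained at `x₀`. -/
noncomputable def optimalPenalty (f : X → ℝ) (x₀ : X) (α : ℝ) (x : X) : ℝ :=
  1 - clampedExcess f x₀ α x / α

lemma abs_optimalPenalty_le (hα : 0 < α) : |optimalPenalty f x₀ α x| ≤ 1 := by
  have h₀ := clampedExcess_nonneg (f := f) (x₀ := x₀) (α := α) (x := x)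
  have h₂ := clampedExcess_le (f := f) (x₀ := x₀) (x := x) hα.le
  rw [optimalPenalty, abs_le]
  constructor
  · linarith [(div_le_iff₀ hα).2 h₂]
  · linarith [div_nonneg h₀ hα.le]

lemma mul_optimalPenalty (hα : 0 < α) :
    α * optimalPenalty f x₀ α x = α - clampedExcess f x₀ α x := by
  rw [optimalPenalty, mul_sub, mul_one, mul_div_cancel₀ _ hα.ne']

lemma sInf_penalized_optimalPenalty (hα : 0 < α) (hx₀ : x₀ ∈ s) (hmin : IsMinOn f s x₀) :
    sInf {z | ∃ x, x ∈ s ∧ z = f x + α * optimalPenalty f x₀ α x} = f x₀ + α := by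
  refine IsLeast.csInf_eq ⟨⟨x₀, hx₀, ?_⟩, ?_⟩
  · rw [mul_optimalPenalty hα, clampedExcess_self, sub_zero]
  · rintro _ ⟨x, hx, rfl⟩
    rw [mul_optimalPenalty hα]
    linarith [clampedExcess_le_sub (α := α) hmin hx]

variable [MeasurableSpace X] {μ : Measure X} [IsProbabilityMeasure μ]

lemma measurable_clampedExcess (hf : Measurable f) : Measurable (clampedExcess f x₀ α) :=
  measurable_const.max ((hf.sub_const _).min measurable_const)

lemma integrable_clampedExcess (hf : Measurable f) (hα : 0 ≤ α) :
    Integrable (clampedExcess f x₀ α) μ :=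
  .of_bound (measurable_clampedExcess hf).aestronglyMeasurable (2 * α) (.of_forall fun _ => by
    rw [Real.norm_of_nonneg clampedExcess_nonneg]; exact clampedExcess_le hα)

lemma sInf_penalized_sub_integral_le (hf : Measurable f) (hα : 0 ≤ α) (hx₀ : x₀ ∈ s)
    (hmin : IsMinOn f s x₀) (hμ : ∀ᵐ x ∂μ, x ∈ s) (hχm : Measurable χ) (hχ : ∀ x, |χ x| ≤ 1) :
    sInf {z | ∃ x, x ∈ s ∧ z = f x + α * χ x} - α * ∫ x, χ x ∂μ ≤
      f x₀ + ∫ x, clampedExcess f x₀ α x ∂μ := by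
  set I := sInf {z | ∃ x, x ∈ s ∧ z = f x + α * χ x}
  have hχi : Integrable χ μ :=
    .of_bound hχm.aestronglyMeasurable 1 (.of_forall fun x => (Real.norm_eq_abs _).trans_le (hχ x))
  have hhi := integrable_clampedExcess (μ := μ) (x₀ := x₀) hf hα
  calc I - α * ∫ x, χ x ∂μ = ∫ x, (I - α * χ x) ∂μ := by
        rw [integral_sub (integrable_const _) (hχi.const_mul α), integral_const_mul,
          integral_const, probReal_univ, one_smul]
    _ ≤ ∫ x, (f x₀ + clampedExcess f x₀ α x) ∂μ :=
        integral_mono_ae ((integrable_const _).sub (hχi.const_mul α))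
          ((integrable_const _).add hhi)
          (hμ.mono fun x hx => sInf_penalized_sub_le hα hx₀ hmin hχ hx)
    _ = f x₀ + ∫ x, clampedExcess f x₀ α x ∂μ := by
        rw [integral_add (integrable_const _) hhi, integral_const, probReal_univ, one_smul]

lemma mul_integral_optimalPenalty (hf : Measurable f) (hα : 0 < α) :
    α * ∫ x, optimalPenalty f x₀ α x ∂μ = α - ∫ x, clampedExcess f x₀ α x ∂μ := by
  simp_rw [← integral_const_mul, mul_optimalPenalty hα]
  rw [integral_sub (integrable_const _) (integrable_clampedExcess hf hα.le), integral_const,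
    probReal_univ, one_smul]

theorem sSup_penalized_eq_add_integral_min (hf : Measurable f) (hα : 0 < α) (hx₀ : x₀ ∈ s)
    (hmin : IsMinOn f s x₀) (hμ : ∀ᵐ x ∂μ, x ∈ s) :
    sSup {y | ∃ χ : X → ℝ, Measurable χ ∧ (∀ x, |χ x| ≤ 1) ∧
        y = sInf {z | ∃ x, x ∈ s ∧ z = f x + α * χ x} - α * ∫ x, χ x ∂μ} =
      f x₀ + ∫ x, min (f x - f x₀) (2 * α) ∂μ := by
  rw [← integral_congr_ae (hμ.mono fun x hx => clampedExcess_eq_min hα.le hmin hx)]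
  refine IsGreatest.csSup_eq ⟨⟨optimalPenalty f x₀ α,
    measurable_const.sub ((measurable_clampedExcess hf).div_const α),
    fun _ => abs_optimalPenalty_le hα, ?_⟩, ?_⟩
  · rw [sInf_penalized_optimalPenalty hα hx₀ hmin, mul_integral_optimalPenalty hf hα]; ring
  · rintro _ ⟨χ, hχm, hχ, rfl⟩
    exact sInf_penalized_sub_integral_le hf hα.le hx₀ hmin hμ hχm hχ

end TVDual

/-- TV-dual reduction: the supremum over functions ‖χ‖_∞ ≤ 1 of
inf_{v≥0}(π(q,v) + αχ(v)) − α·E_G[χ] equals E_G[min{pq, 2α, pṽ}] − cq. -/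
theorem stmt_18 (p c α q : ℝ) (hc : 0 < c) (hcp : c < p) (hα : 0 < α) (hq : 0 ≤ q)
    (G : Measure ℝ) [IsProbabilityMeasure G] (hsupp : G (Set.Iio 0) = 0) :
    sSup {y : ℝ | ∃ χ : ℝ → ℝ, Measurable χ ∧ (∀ v : ℝ, |χ v| ≤ 1) ∧
        y = sInf {z : ℝ | ∃ v : ℝ, 0 ≤ v ∧ z = p * min q v - c * q + α * χ v}
            - α * ∫ v, χ v ∂G}
      = (∫ v, min (min (p * q) (2 * α)) (p * v) ∂G) - c * q := by
  have hp : 0 ≤ p := by linarith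
  have hG : ∀ᵐ v ∂G, v ∈ Set.Ici (0 : ℝ) := ae_iff.2 (by rwa [← Set.compl_Ici] at hsupp)
  have hmin : IsMinOn (fun v => p * min q v - c * q) (Set.Ici 0) 0 := fun v (hv : 0 ≤ v) =>
    sub_le_sub_right (mul_le_mul_of_nonneg_left (min_le_min_left q hv) hp) _
  refine (TVDual.sSup_penalized_eq_add_integral_min (μ := G) (by fun_prop) hα Set.self_mem_Ici
    hmin hG).trans ?_
  simp only [min_eq_right hq, mul_zero, zero_sub, sub_neg_eq_add, sub_add_cancel,
    mul_min_of_nonneg _ _ hp, min_right_comm (p * q) (p * _) (2 * α)]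
  ring
end
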